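/- arXiv:1810.00064 — 3 statements merged into one kernel-verified Lean document; each statement's English description precedes it below -/
import Mathlib

section
/- Let α₁, ..., αₙ be distinct complex numbers, Y ∈ ℂ, μ ∈ ℂ, and set β_j = X - α_j Y for some X ∈ ℂ, with ∏_j β_j = μ. Let i be an index with |β_i| = min_j |β_j|. If |Y| > max_{j≠i} 2|μ|^(1/n)/|α_j - α_i|, then for every j ≠ i one has |β_j| ≥ (|α_j - α_i|/2)·|Y|. -/
theorem norm_sub_le_two_mul_of_norm_le {E : Type*} [SeminormedAddGroup E] {a b : E}
    (h : ‖b‖ ≤ ‖a‖) : ‖a - b‖ ≤ 2 * ‖a‖ :=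
  (norm_sub_le a b).trans (by linarith)

theorem stmt_3_general (n : ℕ) (α : Fin n → ℂ)
    (X Y : ℂ) (β : Fin n → ℂ) (hβ : ∀ j, β j = X - α j * Y)
    (i : Fin n)
    (hmin : ∀ j, ‖β i‖ ≤ ‖β j‖) :
    ∀ j, j ≠ i → ‖β j‖ ≥ (‖α j - α i‖ / 2) * ‖Y‖ := by
  intro j _
  have hdiff : β j - β i = (α i - α j) * Y := by rw [hβ, hβ]; ring
  have hle := norm_sub_le_two_mul_of_norm_le (hmin j)
  rw [hdiff, norm_mul, norm_sub_rev] at hle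
  linarith

theorem stmt_3 (n : ℕ) (hn : 2 ≤ n) (α : Fin n → ℂ) (hα : Function.Injective α)
    (X Y μ : ℂ) (β : Fin n → ℂ) (hβ : ∀ j, β j = X - α j * Y)
    (hprod : ∏ j, β j = μ) (i : Fin n)
    (hmin : ∀ j, ‖β i‖ ≤ ‖β j‖)
    (hY : ∀ j, j ≠ i →
      ‖Y‖ > 2 * ‖μ‖ ^ ((1 : ℝ) / n) / ‖α j - α i‖) :
    ∀ j, j ≠ i → ‖β j‖ ≥ (‖α j - α i‖ / 2) * ‖Y‖ :=
  stmt_3_general n α X Y β hβ i hmin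
end

section
/- Let α₁, ..., αₙ be distinct complex numbers, X, Y, μ ∈ ℂ with ∏_{j=1}^n (X - α_j Y) = μ. Let i achieve the minimum of |X - α_j Y| over j. Set c_{ji} = |α_j - α_i|/2 for j ≠ i and suppose |Y| > max_{j≠i} |μ|^(1/n)/c_{ji}. Then |X - α_i Y| ≤ (|μ| / ∏_{j≠i} c_{ji}) · |Y|^{1-n}. -/
/-! Let `i` index the factor of `∏ j, (X - α j * Y)` of least absolute value. For `j ≠ i`, the
triangle inequality applied to `(α j - α i) * Y = (X - α i * Y) - (X - α j * Y)` shows that every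
other factor has absolute value at least `|α j - α i| / 2 * |Y|`. Dividing `|μ|` by the product of
these lower bounds bounds the smallest factor. -/

open Finset

theorem norm_sub_div_two_mul_le_of_norm_sub_mul_le {K : Type*} [NormedDivisionRing K]
    {x y a b : K} (h : ‖x - a * y‖ ≤ ‖x - b * y‖) : ‖b - a‖ / 2 * ‖y‖ ≤ ‖x - b * y‖ := by
  have : ‖b - a‖ * ‖y‖ ≤ ‖x - a * y‖ + ‖x - b * y‖ := by
    rw [← norm_mul, show (b - a) * y = (x - a * y) - (x - b * y) by noncomm_ring]
    exact norm_sub_le _ _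
  linarith

theorem norm_mul_prod_erase_le_norm_prod {ι K : Type*} [DecidableEq ι] [NormedField K]
    {s : Finset ι} {i : ι} (hi : i ∈ s) (f : ι → K) {g : ι → ℝ}
    (hg₀ : ∀ j ∈ s.erase i, 0 ≤ g j) (hg : ∀ j ∈ s.erase i, g j ≤ ‖f j‖) :
    ‖f i‖ * ∏ j ∈ s.erase i, g j ≤ ‖∏ j ∈ s, f j‖ := by
  rw [norm_prod, ← mul_prod_erase s _ hi]
  exact mul_le_mul_of_nonneg_left (prod_le_prod hg₀ hg) (norm_nonneg _)

theorem stmt_4_general (n : ℕ) (α : Fin n → ℂ) (hα : Function.Injective α)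
    (X Y μ : ℂ) (hprod : ∏ j, (X - α j * Y) = μ) (i : Fin n)
    (hmin : ∀ j, ‖X - α i * Y‖ ≤ ‖X - α j * Y‖)
    (hY : ∀ j, j ≠ i →
      ‖Y‖ > ‖μ‖ ^ ((1 : ℝ) / n) / (‖α j - α i‖ / 2)) :
    ‖X - α i * Y‖ ≤
      (‖μ‖ / ∏ j ∈ Finset.univ.erase i, (‖α j - α i‖ / 2)) *
        ‖Y‖ ^ ((1 : ℤ) - n) := by
  have hc : ∀ j ∈ univ.erase i, 0 < ‖α j - α i‖ / 2 := fun j hj => by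
    have := sub_ne_zero.mpr (hα.ne (ne_of_mem_erase hj))
    positivity
  have hY₀ : ∀ j ∈ univ.erase i, 0 < ‖Y‖ := fun j hj =>
    (div_nonneg (by positivity) (hc j hj).le).trans_lt (hY j (ne_of_mem_erase hj))
  have hbound : ‖X - α i * Y‖ * ∏ j ∈ univ.erase i, (‖α j - α i‖ / 2 * ‖Y‖) ≤ ‖μ‖ :=
    hprod ▸ norm_mul_prod_erase_le_norm_prod (mem_univ i) _
      (fun j hj => (mul_pos (hc j hj) (hY₀ j hj)).le)
      (fun j _ => norm_sub_div_two_mul_le_of_norm_sub_mul_le (hmin j))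
  have hpos : 0 < ∏ j ∈ univ.erase i, (‖α j - α i‖ / 2 * ‖Y‖) :=
    prod_pos fun j hj => mul_pos (hc j hj) (hY₀ j hj)
  rw [prod_mul_distrib, prod_const, card_erase_of_mem (mem_univ i), card_univ,
    Fintype.card_fin] at hbound hpos
  have hexp : (1 : ℤ) - n = -((n - 1 : ℕ) : ℤ) := by have := i.pos; omega
  rw [hexp, zpow_neg, zpow_natCast, ← div_eq_mul_inv, div_div, le_div_iff₀ hpos]
  exact hbound

theorem stmt_4 (n : ℕ) (hn : 2 ≤ n) (α : Fin n → ℂ) (hα : Function.Injective α)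
    (X Y μ : ℂ) (hprod : ∏ j, (X - α j * Y) = μ) (i : Fin n)
    (hmin : ∀ j, ‖X - α i * Y‖ ≤ ‖X - α j * Y‖)
    (hY : ∀ j, j ≠ i →
      ‖Y‖ > ‖μ‖ ^ ((1 : ℝ) / n) / (‖α j - α i‖ / 2)) :
    ‖X - α i * Y‖ ≤
      (‖μ‖ / ∏ j ∈ Finset.univ.erase i, (‖α j - α i‖ / 2)) *
        ‖Y‖ ^ ((1 : ℤ) - n) :=
  stmt_4_general n α hα X Y μ hprod i hmin hY
end

section
/- The only integer pairs (X, Y) with X⁶ + 2X⁵Y + 3X⁴Y² + 21Y⁶ = 1 and |X|, |Y| ≤ 334 are (1, 0) and (−1, 0). -/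
theorem stmt_15 (X Y : ℤ) :
    (X ^ 6 + 2 * X ^ 5 * Y + 3 * X ^ 4 * Y ^ 2 + 21 * Y ^ 6 = 1 ∧ |X| ≤ 334 ∧ |Y| ≤ 334) ↔
      ((X, Y) = (1, 0) ∨ (X, Y) = (-1, 0)) := by
  constructor
  · rintro ⟨h, -, -⟩
    have hY : Y = 0 := by
      by_contra hY
      have h1 : 1 ≤ Y ^ 2 := by
        rcases lt_or_gt_of_ne hY with h' | h' <;> nlinarith
      have h2 : (0:ℤ) ≤ X ^ 4 * ((X + Y) ^ 2 + 2 * Y ^ 2) := by positivity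
      have h3 : 1 ≤ Y ^ 6 := by nlinarith [sq_nonneg (Y^2), sq_nonneg Y, mul_le_mul h1 (mul_le_mul h1 h1 (by positivity) (by positivity)) (by positivity) (by positivity)]
      nlinarith
    subst hY
    have hX : X ^ 6 = 1 := by linarith
    have h2 : X ^ 2 = 1 := by nlinarith [sq_nonneg X, sq_nonneg (X ^ 2 - 1), sq_nonneg (X ^ 2 + 1)]
    rcases sq_eq_one_iff.mp h2 with h | h <;> simp [h]
  · rintro (h | h) <;> simp_all
end
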